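/- Let Λ_P be a Penrose model set and let U ⊂ S¹ be an arbitrary, but fixed, finite set of pairwise non-parallel ℤ[ζ₅]-directions. Then the class 𝓕(Λ_P) of all finite subsets of Λ_P is not determined by the X-rays in the directions of U: there exist distinct finite sets F, F' ⊂ Λ_P with X_uF = X_uF' for all u ∈ U. -/

import Mathlib

open scoped Pointwise

noncomputable section

instance : TopologicalSpace (ZMod 5) := ⊥
instance : DiscreteTopology (ZMod 5) := ⟨rfl⟩

/-- The primitive 5th root of unity ζ₅ = exp(2πi/5). -/
def zeta5 : ℂ := Complex.exp (2 * Real.pi * Complex.I / 5)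

/-- The ring of cyclotomic integers ℤ[ζ₅], as the set of ℤ-combinations of 1, ζ₅, ζ₅², ζ₅³. -/
def Zzeta5 : Set ℂ := {z | ∃ a : Fin 4 → ℤ, z = ∑ j : Fin 4, (a j : ℂ) * zeta5 ^ (j : ℕ)}

/-- The (unique) integer coefficients of an element of ℤ[ζ₅] w.r.t. the basis 1, ζ₅, ζ₅², ζ₅³. -/
def coeffs (z : ℂ) : Fin 4 → ℤ :=
  open Classical in
  if h : z ∈ Zzeta5 then h.choose else 0

/-- The star map z ↦ (σ₂(z), Σ aⱼ(z) mod 5), with σ₂ the Galois automorphism ζ₅ ↦ ζ₅². -/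
def starMap (z : ℂ) : ℂ × ZMod 5 :=
  (∑ j : Fin 4, (coeffs z j : ℂ) * zeta5 ^ (2 * (j : ℕ)),
   ∑ j : Fin 4, ((coeffs z j : ℤ) : ZMod 5))

/-- The regular pentagon P: the convex hull of the 5th roots of unity. -/
def pent : Set ℂ := convexHull ℝ {z : ℂ | z ^ 5 = 1}

/-- The golden ratio τ = (1+√5)/2. -/
def tauR : ℝ := (1 + Real.sqrt 5) / 2

/-- The Penrose window W_P ⊂ ℝ² × ℤ/5ℤ. -/
def WP : Set (ℂ × ZMod 5) :=
  (pent ×ˢ ({1} : Set (ZMod 5))) ∪ ((-pent) ×ˢ ({2} : Set (ZMod 5))) ∪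
    ((tauR • pent) ×ˢ ({3} : Set (ZMod 5))) ∪ ((-(tauR • pent)) ×ˢ ({4} : Set (ZMod 5)))

/-- The shifted window W_P^u = (u, 0) + W_P. -/
def WPu (u : ℂ) : Set (ℂ × ZMod 5) := (fun p => ((u, (0 : ZMod 5)) + p)) '' WP

/-- The model set Λ_P^u = {z ∈ ℤ[ζ₅] : z⋆ ∈ W_P^u}. -/
def LambdaPu (u : ℂ) : Set ℂ := {z | z ∈ Zzeta5 ∧ starMap z ∈ WPu u}

/-- Λ_P^u is generic if the boundary of W_P^u contains no point of ℤ[ζ₅]⋆. -/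
def IsGeneric (u : ℂ) : Prop := ∀ z ∈ Zzeta5, starMap z ∉ frontier (WPu u)

/-- A Penrose model set: a translate t + Λ_P^u of a generic Λ_P^u. -/
def IsPMS (Λ : Set ℂ) : Prop := ∃ t u : ℂ, IsGeneric u ∧ Λ = (fun z => t + z) '' LambdaPu u

/-- v is parallel to u. -/
def Par (u v : ℂ) : Prop := ∃ r : ℝ, r ≠ 0 ∧ v = r • u

/-- A ℤ[ζ₅]-direction: a direction parallel to a nonzero element of ℤ[ζ₅]. -/
def IsZ5Direction (u : ℂ) : Prop := ∃ z ∈ Zzeta5, z ≠ 0 ∧ Par u z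

/-- The line through p in direction u. -/
def line (u p : ℂ) : Set ℂ := {x | ∃ t : ℝ, x = p + t • u}

/-- The X-ray of F in direction u, as a function of the base point of the line. -/
def Xray (u : ℂ) (F : Set ℂ) : ℂ → ℕ := fun p => (F ∩ line u p).ncard

/-- A convex subset C of Λ: a finite subset with C = conv(C) ∩ Λ. -/
def IsConvexSubset (Λ C : Set ℂ) : Prop :=
  C.Finite ∧ C ⊆ Λ ∧ C = convexHull ℝ C ∩ Λ

/-!
Every element of ℤ[ζ₅] is `p(ζ₅)` for some `p ∈ ℤ[X]`, and its star image is
`(p(ζ₅²), p(1) mod 5)`. Choose `p₀` whose star image lies inside the pentagon component of the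
window, at positive distance `ε` from its boundary. For each direction `v ∈ U` choose `w_v ∈ 5ℤ[ζ₅]`
parallel to `v`; multiplying by powers of the unit `ζ₅² + ζ₅³ = -φ`, whose conjugate is `φ⁻¹`,
makes each `w_v` as large and its star image as small as we like. So all the points
`t + p₀(ζ₅) + ∑_{v ∈ S} w_v`, `S ⊆ U`, lie in `Λ` and are pairwise distinct. Those with `|S|` even
and those with `|S|` odd form the two sets: toggling `v` in `S` moves a point along a line parallel
to `v` and flips the parity of `|S|`, so the two sets have the same X-ray in every direction of `U`.
-/

open Polynomial
open scoped goldenRatio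

lemma isPrimitiveRoot_zeta5 : IsPrimitiveRoot zeta5 5 :=
  Complex.isPrimitiveRoot_exp 5 (by norm_num)

lemma zeta5_pow_five : zeta5 ^ 5 = 1 := isPrimitiveRoot_zeta5.pow_eq_one

lemma zeta5_eq_exp : zeta5 = Complex.exp (↑(2 * Real.pi / 5) * Complex.I) := by
  rw [zeta5]; push_cast; ring_nf

lemma zeta5_im_pos : 0 < zeta5.im := by
  rw [zeta5_eq_exp, Complex.exp_ofReal_mul_I_im]
  exact Real.sin_pos_of_pos_of_lt_pi (by positivity) (by linarith [Real.pi_pos])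

lemma norm_zeta5 : ‖zeta5‖ = 1 := by
  rw [zeta5_eq_exp, Complex.norm_exp_ofReal_mul_I]

lemma aeval_zeta5_cyclotomic : aeval zeta5 (cyclotomic 5 ℤ) = 0 := by
  rw [aeval_def, eval₂_eq_eval_map, map_cyclotomic, ← IsRoot.def]
  exact isPrimitiveRoot_zeta5.isRoot_cyclotomic (by norm_num)

lemma aeval_zeta5_sq_cyclotomic : aeval (zeta5 ^ 2) (cyclotomic 5 ℤ) = 0 := by
  rw [aeval_def, eval₂_eq_eval_map, map_cyclotomic, ← IsRoot.def]
  exact (isPrimitiveRoot_zeta5.pow_of_coprime 2 (by norm_num)).isRoot_cyclotomic (by norm_num)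

lemma aeval_one_cyclotomic_five : aeval (1 : ZMod 5) (cyclotomic 5 ℤ) = 0 := by
  rw [aeval_def, eval₂_eq_eval_map, map_cyclotomic,
    eval_one_cyclotomic_prime (R := ZMod 5) (p := 5) (hn := ⟨by norm_num⟩)]
  rfl

lemma linearIndependent_zeta5_pow : LinearIndependent ℚ fun i : Fin 4 => zeta5 ^ (i : ℕ) := by
  have hdeg : (minpoly ℚ zeta5).natDegree = 4 := by
    rw [← cyclotomic_eq_minpoly_rat isPrimitiveRoot_zeta5 (by norm_num), natDegree_cyclotomic]
    rfl
  have := linearIndependent_pow (K := ℚ) zeta5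
  rwa [hdeg] at this

lemma coeffs_sum_mul_zeta5_pow (a : Fin 4 → ℤ) :
    coeffs (∑ j : Fin 4, (a j : ℂ) * zeta5 ^ (j : ℕ)) = a := by
  have hmem : ∑ j : Fin 4, (a j : ℂ) * zeta5 ^ (j : ℕ) ∈ Zzeta5 := ⟨a, rfl⟩
  have hspec := hmem.choose_spec
  rw [_root_.coeffs, dif_pos hmem]
  set b := hmem.choose
  have hzero : ∑ j : Fin 4, ((b j - a j : ℤ) : ℚ) • zeta5 ^ (j : ℕ) = 0 := by
    simp only [Rat.smul_def, Int.cast_sub, Rat.cast_sub, Rat.cast_intCast, sub_mul,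
      Finset.sum_sub_distrib]
    rw [← hspec, sub_self]
  funext j
  have := Fintype.linearIndependent_iff.1 linearIndependent_zeta5_pow _ hzero j
  exact sub_eq_zero.1 (Int.cast_eq_zero.1 this)

lemma aeval_eq_sum_coeff_modByMonic_cyclotomic_five {R : Type*} [CommRing R] {x : R}
    (hx : aeval x (cyclotomic 5 ℤ) = 0) (p : ℤ[X]) :
    aeval x p = ∑ j : Fin 4, ((p %ₘ cyclotomic 5 ℤ).coeff j : R) * x ^ (j : ℕ) := by
  have hdeg : (p %ₘ cyclotomic 5 ℤ).natDegree < 4 := by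
    have htot : Nat.totient 5 = 4 := Nat.totient_prime (by norm_num)
    have hne : cyclotomic 5 ℤ ≠ 1 := fun h => by simpa [h, htot] using natDegree_cyclotomic 5 ℤ
    simpa [natDegree_cyclotomic, htot] using
      natDegree_modByMonic_lt p (cyclotomic.monic 5 ℤ) hne
  conv_lhs => rw [← modByMonic_add_div p (cyclotomic 5 ℤ)]
  rw [map_add, map_mul, hx, zero_mul, add_zero, aeval_eq_sum_range' hdeg,
    ← Fin.sum_univ_eq_sum_range]
  simp only [zsmul_eq_mul]

lemma starMap_aeval_zeta5 (p : ℤ[X]) :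
    starMap (aeval zeta5 p) = (aeval (zeta5 ^ 2) p, ((p.eval 1 : ℤ) : ZMod 5)) := by
  have hcast : ((p.eval 1 : ℤ) : ZMod 5) = aeval (1 : ZMod 5) p := by
    rw [aeval_def, eval₂_at_one, algebraMap_int_eq, eq_intCast]
  rw [starMap, aeval_eq_sum_coeff_modByMonic_cyclotomic_five aeval_zeta5_cyclotomic,
    coeffs_sum_mul_zeta5_pow, aeval_eq_sum_coeff_modByMonic_cyclotomic_five
      aeval_zeta5_sq_cyclotomic, hcast,
    aeval_eq_sum_coeff_modByMonic_cyclotomic_five aeval_one_cyclotomic_five]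
  simp [pow_mul]

lemma aeval_zeta5_mem_Zzeta5 (p : ℤ[X]) : aeval zeta5 p ∈ Zzeta5 :=
  ⟨_, aeval_eq_sum_coeff_modByMonic_cyclotomic_five aeval_zeta5_cyclotomic p⟩

lemma exists_aeval_zeta5_eq {z : ℂ} (hz : z ∈ Zzeta5) : ∃ p : ℤ[X], aeval zeta5 p = z := by
  obtain ⟨a, rfl⟩ := hz
  exact ⟨∑ j : Fin 4, C (a j) * X ^ (j : ℕ), by simp⟩

lemma sum_zeta5_pow : 1 + zeta5 + zeta5 ^ 2 + zeta5 ^ 3 + zeta5 ^ 4 = 0 := by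
  simpa [Finset.sum_range_succ] using isPrimitiveRoot_zeta5.geom_sum_eq_zero (by norm_num)

lemma aeval_zeta5_X_sq_add_X_cube : aeval zeta5 (X ^ 2 + X ^ 3 : ℤ[X]) = ((-φ : ℝ) : ℂ) := by
  have hθ : zeta5 ^ 2 = Complex.exp (↑(4 * Real.pi / 5) * Complex.I) := by
    rw [zeta5_eq_exp, ← Complex.exp_nat_mul]; push_cast; ring_nf
  have hinv : zeta5 ^ 3 = (zeta5 ^ 2)⁻¹ :=
    eq_inv_of_mul_eq_one_left (by rw [← pow_add]; exact zeta5_pow_five)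
  have hcos : Real.cos (4 * Real.pi / 5) = -((1 + √5) / 4) := by
    rw [show 4 * Real.pi / 5 = Real.pi - Real.pi / 5 by ring, Real.cos_pi_sub,
      Real.cos_pi_div_five]
  rw [map_add, map_pow, map_pow, aeval_X, hinv, hθ, ← Complex.exp_neg, ← neg_mul,
    ← Complex.two_cos, ← Complex.ofReal_cos, hcos, Real.goldenRatio]
  push_cast; ring

lemma aeval_zeta5_sq_X_sq_add_X_cube :
    aeval (zeta5 ^ 2) (X ^ 2 + X ^ 3 : ℤ[X]) = ((φ⁻¹ : ℝ) : ℂ) := by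
  have hprod :
      aeval zeta5 (X ^ 2 + X ^ 3 : ℤ[X]) * aeval (zeta5 ^ 2) (X ^ 2 + X ^ 3 : ℤ[X]) = -1 := by
    simp only [map_add, map_pow, aeval_X]
    linear_combination (zeta5 + zeta5 ^ 2 + zeta5 ^ 3 + zeta5 ^ 4) * zeta5_pow_five + sum_zeta5_pow
  rw [aeval_zeta5_X_sq_add_X_cube] at hprod
  have hφ : ((-φ : ℝ) : ℂ) ≠ 0 := by exact_mod_cast neg_ne_zero.2 Real.goldenRatio_pos.ne'
  refine mul_left_cancel₀ hφ ?_
  rw [hprod, ← Complex.ofReal_mul, neg_mul, mul_inv_cancel₀ Real.goldenRatio_pos.ne',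
    Complex.ofReal_neg, Complex.ofReal_one]

lemma Complex.exists_ofReal_add_ofReal_mul_eq {w : ℂ} (hw : w.im ≠ 0) (z : ℂ) :
    ∃ a b : ℝ, (a : ℂ) + b * w = z :=
  ⟨z.re - z.im / w.im * w.re, z.im / w.im, by apply Complex.ext <;> simp; field_simp⟩

lemma Complex.exists_int_near {w : ℂ} (hw : w.im ≠ 0) {δ : ℝ} (hδ : 0 < δ) (x : ℂ) :
    ∃ m n : ℤ, ‖x - δ * (m + n * w)‖ ≤ δ * (1 + ‖w‖) / 2 := by
  obtain ⟨a, b, hab⟩ := Complex.exists_ofReal_add_ofReal_mul_eq hw (x / δ)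
  refine ⟨round a, round b, ?_⟩
  have hx : x - δ * (round a + round b * w) = δ * ((a - round a : ℝ) + (b - round b : ℝ) * w) := by
    have hδ' : (δ : ℂ) ≠ 0 := by exact_mod_cast hδ.ne'
    rw [eq_div_iff hδ'] at hab
    push_cast
    linear_combination -hab
  rw [hx, norm_mul, Complex.norm_real, Real.norm_of_nonneg hδ.le, mul_div_assoc]
  gcongr
  calc ‖((a - round a : ℝ) : ℂ) + (b - round b : ℝ) * w‖
      ≤ |a - round a| + |b - round b| * ‖w‖ := by
        refine (norm_add_le _ _).trans ?_
        rw [norm_mul, Complex.norm_real, Complex.norm_real, Real.norm_eq_abs, Real.norm_eq_abs]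
    _ ≤ 1 / 2 + 1 / 2 * ‖w‖ := by
        gcongr
        · exact abs_sub_round a
        · exact abs_sub_round b
    _ = (1 + ‖w‖) / 2 := by ring

lemma exists_aeval_zeta5_sq_near (y : ℂ) {ε : ℝ} (hε : 0 < ε) :
    ∃ p : ℤ[X], ((p.eval 1 : ℤ) : ZMod 5) = 1 ∧ ‖aeval (zeta5 ^ 2) p - y‖ < ε := by
  obtain ⟨k, hk⟩ := exists_pow_lt_of_lt_one (div_pos hε (by norm_num : (0 : ℝ) < 5))
    (inv_lt_one_of_one_lt₀ Real.one_lt_goldenRatio)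
  obtain ⟨m, n, hmn⟩ := Complex.exists_int_near zeta5_im_pos.ne'
    (by positivity : (0 : ℝ) < 5 * φ⁻¹ ^ k) (y - 1)
  refine ⟨1 + 5 * (X ^ 2 + X ^ 3) ^ k * (C m + C n * X ^ 3), ?_, ?_⟩
  · have h5 : (5 : ZMod 5) = 0 := rfl
    simp [h5]
  · have h6 : (zeta5 ^ 2) ^ 3 = zeta5 := by
      rw [← pow_mul, show 2 * 3 = 5 + 1 by rfl, pow_succ, zeta5_pow_five, one_mul]
    have : aeval (zeta5 ^ 2) (1 + 5 * (X ^ 2 + X ^ 3) ^ k * (C m + C n * X ^ 3) : ℤ[X]) - y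
        = -((y - 1) - (5 * φ⁻¹ ^ k : ℝ) * (m + n * zeta5)) := by
      rw [map_add, map_mul, map_mul, map_pow, aeval_zeta5_sq_X_sq_add_X_cube]
      simp only [map_add, map_mul, map_pow, aeval_X, h6, map_one, map_ofNat, eq_intCast,
        map_intCast]
      push_cast; ring
    rw [this, norm_neg]
    calc _ ≤ 5 * φ⁻¹ ^ k * (1 + ‖zeta5‖) / 2 := hmn
      _ < ε := by rw [norm_zeta5]; linarith

lemma interior_pent_nonempty : (interior pent).Nonempty := by
  have h1 : (1 : ℂ) ∈ {z : ℂ | z ^ 5 = 1} := one_pow 5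
  rw [pent, interior_convexHull_nonempty_iff_affineSpan_eq_top,
    AffineSubspace.affineSpan_eq_top_iff_vectorSpan_eq_top_of_nonempty ℝ ℂ ℂ ⟨1, h1⟩]
  set V := vectorSpan ℝ {z : ℂ | z ^ 5 = 1}
  have hroot (j : ℕ) : zeta5 ^ j - 1 ∈ V := by
    have hj : zeta5 ^ j ∈ {z : ℂ | z ^ 5 = 1} := by
      rw [Set.mem_ofPred_eq, ← pow_mul, mul_comm, pow_mul, zeta5_pow_five, one_pow]
    simpa using vsub_mem_vectorSpan ℝ hj h1
  have hone : (1 : ℂ) ∈ V := by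
    have hsum : ∑ j ∈ Finset.range 5, (zeta5 ^ j - 1) = -5 := by
      rw [Finset.sum_sub_distrib, isPrimitiveRoot_zeta5.geom_sum_eq_zero (by norm_num)]
      simp
    have := V.smul_mem (-1 / 5 : ℝ) (V.sum_mem (t := Finset.range 5) fun j _ => hroot j)
    rw [hsum, Complex.real_smul] at this
    convert this using 1
    push_cast; norm_num
  have hζ : zeta5 ∈ V := by simpa using V.add_mem (hroot 1) hone
  refine eq_top_iff.2 fun z _ => ?_
  obtain ⟨a, b, rfl⟩ := Complex.exists_ofReal_add_ofReal_mul_eq zeta5_im_pos.ne' z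
  simpa [Complex.real_smul] using V.add_mem (V.smul_mem a hone) (V.smul_mem b hζ)

lemma aeval_zeta5_mem_LambdaPu {u : ℂ} {p : ℤ[X]} (h1 : ((p.eval 1 : ℤ) : ZMod 5) = 1)
    (hp : aeval (zeta5 ^ 2) p - u ∈ pent) : aeval zeta5 p ∈ LambdaPu u :=
  ⟨aeval_zeta5_mem_Zzeta5 p, (aeval (zeta5 ^ 2) p - u, 1),
    Or.inl (Or.inl (Or.inl ⟨hp, rfl⟩)), by rw [starMap_aeval_zeta5, h1]; simp⟩

section SubsetSums

open Finset

variable {α E : Type*} [DecidableEq α]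

lemma Finset.injOn_sum_powerset_insert [SeminormedAddCommGroup E] {g : α → E} {s : Finset α}
    {a : α} (hs : Set.InjOn (fun S => ∑ v ∈ S, g v) s.powerset)
    (hg : 2 * ∑ v ∈ s, ‖g v‖ < ‖g a‖) :
    Set.InjOn (fun S => ∑ v ∈ S, g v) (insert a s).powerset := by
  have hbound : ∀ S ⊆ s, ‖∑ v ∈ S, g v‖ ≤ ∑ v ∈ s, ‖g v‖ := fun S hS =>
    (norm_sum_le _ _).trans (Finset.sum_le_sum_of_subset_of_nonneg hS fun _ _ _ => norm_nonneg _)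
  have hsep : ∀ S T, S ⊆ insert a s → T ⊆ s → a ∈ S → ∑ v ∈ S, g v ≠ ∑ v ∈ T, g v := by
    intro S T hS hT haS heq
    rw [← Finset.add_sum_erase S g haS] at heq
    have : ‖g a‖ ≤ ‖∑ v ∈ T, g v‖ + ‖∑ v ∈ S.erase a, g v‖ := by
      rw [eq_sub_of_add_eq heq]; exact norm_sub_le _ _
    linarith [hbound T hT, hbound _ (Finset.subset_insert_iff.1 hS)]
  intro S hS T hT heq
  rw [Finset.mem_coe, Finset.mem_powerset] at hS hT
  by_cases haS : a ∈ S <;> by_cases haT : a ∈ T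
  · rw [← Finset.insert_erase haS, ← Finset.insert_erase haT]
    refine congrArg _ (hs (Finset.mem_powerset.2 (Finset.subset_insert_iff.1 hS))
      (Finset.mem_powerset.2 (Finset.subset_insert_iff.1 hT)) ?_)
    simp only at heq ⊢
    rw [← Finset.add_sum_erase S g haS, ← Finset.add_sum_erase T g haT] at heq
    exact add_left_cancel heq
  · exact absurd heq (hsep S T hS ((Finset.subset_insert_iff_of_notMem haT).1 hT) haS)
  · exact absurd heq.symm (hsep T S hT ((Finset.subset_insert_iff_of_notMem haS).1 hS) haT)
  · exact hs (Finset.mem_powerset.2 ((Finset.subset_insert_iff_of_notMem haS).1 hS))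
      (Finset.mem_powerset.2 ((Finset.subset_insert_iff_of_notMem haT).1 hT)) heq

lemma exists_pow_smul_sum_injOn [NormedAddCommGroup E] [NormedSpace ℝ E] (U : Finset α)
    {f : α → E} (hf : ∀ v ∈ U, f v ≠ 0) {c : ℝ} (hc : 1 < |c|) (N : ℕ) :
    ∃ k : α → ℕ, (∀ v ∈ U, N ≤ k v) ∧
      Set.InjOn (fun S => ∑ v ∈ S, c ^ k v • f v) U.powerset := by
  induction U using Finset.induction_on with
  | empty => exact ⟨fun _ => N, by simp, by simp⟩
  | insert a s ha ih =>
    obtain ⟨k, hkN, hkinj⟩ := ih fun v hv => hf v (Finset.mem_insert_of_mem hv)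
    have hfa : 0 < ‖f a‖ := norm_pos_iff.2 (hf a (Finset.mem_insert_self a s))
    obtain ⟨K, hK⟩ := pow_unbounded_of_one_lt ((2 * ∑ v ∈ s, ‖c ^ k v • f v‖) / ‖f a‖) hc
    rw [div_lt_iff₀ hfa] at hK
    set k' := Function.update k a (max N K)
    have hk' : ∀ v ∈ s, k' v = k v := fun v hv =>
      Function.update_of_ne (ne_of_mem_of_not_mem hv ha) _ _
    have hka : k' a = max N K := Function.update_self _ _ _
    refine ⟨k', ?_, Finset.injOn_sum_powerset_insert ?_ ?_⟩
    · intro v hv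
      rcases Finset.mem_insert.1 hv with rfl | hv
      · exact hka ▸ le_max_left _ _
      · rw [hk' v hv]; exact hkN v hv
    · refine hkinj.congr fun S hS => Finset.sum_congr rfl fun v hv => ?_
      rw [hk' v (Finset.mem_powerset.1 hS hv)]
    · rw [Finset.sum_congr rfl fun v hv => by rw [hk' v hv], norm_smul,
        norm_pow, Real.norm_eq_abs, hka]
      calc _ < |c| ^ K * ‖f a‖ := hK
        _ ≤ |c| ^ max N K * ‖f a‖ := by gcongr; exacts [hc.le, le_max_right _ _]

lemma Finset.symmDiff_singleton (S : Finset α) (a : α) :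
    symmDiff S {a} = if a ∈ S then S.erase a else insert a S := by
  split_ifs with h <;> ext x <;> by_cases hx : x = a <;> simp_all [Finset.mem_symmDiff]

lemma Finset.sum_symmDiff_singleton_sub_sum [AddCommGroup E] (f : α → E) (S : Finset α) (a : α) :
    ∑ v ∈ symmDiff S {a}, f v - ∑ v ∈ S, f v = if a ∈ S then -f a else f a := by
  rw [Finset.symmDiff_singleton]
  split_ifs with h
  · rw [← Finset.add_sum_erase S f h]; abel
  · rw [Finset.sum_insert h]; abel

lemma Finset.even_card_symmDiff_singleton_iff (S : Finset α) (a : α) :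
    Even #(symmDiff S {a}) ↔ ¬ Even #S := by
  rw [Finset.symmDiff_singleton]
  split_ifs with h
  · rw [← Finset.card_erase_add_one h, Nat.even_add_one, not_not]
  · rw [Finset.card_insert_of_notMem h, Nat.even_add_one]

lemma Finset.card_filter_even_eq_card_filter_odd (U : Finset α) {a : α} (ha : a ∈ U)
    (P : Finset α → Prop) [DecidablePred P] (hP : ∀ S, P (symmDiff S {a}) ↔ P S) :
    #{S ∈ U.powerset | Even #S ∧ P S} = #{S ∈ U.powerset | ¬ Even #S ∧ P S} := by
  have hsub : ∀ S ⊆ U, symmDiff S {a} ⊆ U := fun S hS =>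
    (Finset.symmDiff_subset_union).trans (Finset.union_subset hS (Finset.singleton_subset_iff.2 ha))
  refine Finset.card_bij' (fun S _ => symmDiff S {a}) (fun S _ => symmDiff S {a}) ?_ ?_
    (fun S _ => symmDiff_symmDiff_cancel_right _ _) (fun S _ => symmDiff_symmDiff_cancel_right _ _)
  all_goals
    intro S hS
    simp only [Finset.mem_filter, Finset.mem_powerset] at hS ⊢
    simp only [Finset.even_card_symmDiff_singleton_iff, hP, not_not]
    exact ⟨hsub S hS.1, hS.2⟩

end SubsetSums

lemma mem_line_iff {u p x : ℂ} : x ∈ line u p ↔ x - p ∈ ℝ ∙ u := by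
  simp only [line, Set.mem_ofPred_eq, Submodule.mem_span_singleton]
  exact exists_congr fun t => ⟨fun h => by rw [h, add_sub_cancel_left],
    fun h => by rw [h, add_sub_cancel]⟩

lemma Set.ncard_coe_image_inter {β γ : Type*} [DecidableEq γ] {s : Finset β} {g : β → γ}
    (hg : Set.InjOn g s) (L : Set γ) [DecidablePred (· ∈ L)] :
    ((s.image g : Set γ) ∩ L).ncard = (s.filter (g · ∈ L)).card := by
  have : (s.image g : Set γ) ∩ L = g '' (s.filter (g · ∈ L) : Set β) := by
    ext x; simp only [Set.mem_inter_iff, Finset.coe_image, Finset.coe_filter, Set.mem_image]; aesop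
  rw [this, (hg.mono (Finset.coe_subset.2 (Finset.filter_subset _ _))).ncard_image,
    Set.ncard_coe_finset]

open Finset in
lemma exists_ne_xray_eq_of_injOn_sum {Λ : Set ℂ} {U : Finset ℂ} {b : ℂ} {f : ℂ → ℂ}
    (hΛ : ∀ S ⊆ U, b + ∑ v ∈ S, f v ∈ Λ)
    (hinj : Set.InjOn (fun S => ∑ v ∈ S, f v) U.powerset)
    (hpar : ∀ v ∈ U, f v ∈ ℝ ∙ v) :
    ∃ F F' : Set ℂ, F ⊆ Λ ∧ F.Finite ∧ F' ⊆ Λ ∧ F'.Finite ∧ F ≠ F' ∧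
      ∀ u ∈ U, Xray u F = Xray u F' := by
  classical
  set g : Finset ℂ → ℂ := fun S => b + ∑ v ∈ S, f v
  have hg : Set.InjOn g U.powerset := fun S hS T hT h => hinj hS hT (add_left_cancel h)
  set Ev := U.powerset.filter fun S => Even #S
  set Od := U.powerset.filter fun S => ¬ Even #S
  have hsubset (P : Finset ℂ → Prop) [DecidablePred P] :
      ((U.powerset.filter P).image g : Set ℂ) ⊆ Λ := by
    intro x hx
    obtain ⟨S, hS, rfl⟩ := Finset.mem_image.1 (Finset.mem_coe.1 hx)
    exact hΛ S (Finset.mem_powerset.1 (Finset.mem_filter.1 hS).1)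
  refine ⟨Ev.image g, Od.image g, hsubset _, Finset.finite_toSet _, hsubset _,
    Finset.finite_toSet _, fun hEq => ?_, fun u hu => funext fun p => ?_⟩
  · have h0 : g ∅ ∈ (Od.image g : Set ℂ) := hEq ▸ Finset.mem_coe.2
      (Finset.mem_image_of_mem g (by simp [Ev]))
    obtain ⟨S, hS, hgS⟩ := Finset.mem_image.1 (Finset.mem_coe.1 h0)
    have hS' := Finset.mem_filter.1 hS
    obtain rfl : S = ∅ := hg (Finset.mem_coe.2 hS'.1) (by simp) hgS
    exact hS'.2 (by simp)
  · have hline (S : Finset ℂ) : g (symmDiff S {u}) ∈ line u p ↔ g S ∈ line u p := by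
      have hstep : g (symmDiff S {u}) - p
          = (g S - p) + (∑ v ∈ symmDiff S {u}, f v - ∑ v ∈ S, f v) := by
        simp only [g]; abel
      have hdiff : ∑ v ∈ symmDiff S {u}, f v - ∑ v ∈ S, f v ∈ ℝ ∙ u := by
        rw [Finset.sum_symmDiff_singleton_sub_sum]
        split_ifs
        exacts [Submodule.neg_mem _ (hpar u hu), hpar u hu]
      rw [mem_line_iff, mem_line_iff, hstep, Submodule.add_mem_iff_left _ hdiff]
    simp only [Xray]
    rw [Set.ncard_coe_image_inter (hg.mono (Finset.coe_subset.2 (Finset.filter_subset _ _))),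
      Set.ncard_coe_image_inter (hg.mono (Finset.coe_subset.2 (Finset.filter_subset _ _))),
      Finset.filter_filter, Finset.filter_filter]
    exact Finset.card_filter_even_eq_card_filter_odd U hu _ hline

lemma exists_switching_family (U : Finset ℂ) (hU : ∀ v ∈ U, IsZ5Direction v) {ε : ℝ}
    (hε : 0 < ε) :
    ∃ w : ℂ → ℤ[X], (∀ v ∈ U, (((w v).eval 1 : ℤ) : ZMod 5) = 0) ∧
      (∀ v ∈ U, aeval zeta5 (w v) ∈ ℝ ∙ v) ∧
      Set.InjOn (fun S => ∑ v ∈ S, aeval zeta5 (w v)) U.powerset ∧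
      ∑ v ∈ U, ‖aeval (zeta5 ^ 2) (w v)‖ < ε := by
  classical
  have hdir : ∀ v ∈ U, ∃ p : ℤ[X], aeval zeta5 p ≠ 0 ∧ aeval zeta5 p ∈ ℝ ∙ v := by
    intro v hv
    obtain ⟨z, hz, hz0, r, -, rfl⟩ := hU v hv
    obtain ⟨p, hp⟩ := exists_aeval_zeta5_eq hz
    exact ⟨p, hp ▸ hz0, hp ▸ Submodule.smul_mem _ r (Submodule.mem_span_singleton_self v)⟩
  choose! p hp0 hpv using hdir
  set M := ∑ v ∈ U, ‖aeval (zeta5 ^ 2) (p v)‖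
  have hφ : φ⁻¹ < 1 := inv_lt_one_of_one_lt₀ Real.one_lt_goldenRatio
  obtain ⟨N, hN⟩ := exists_pow_lt_of_lt_one (show 0 < ε / (5 * (M + 1)) by positivity) hφ
  obtain ⟨k, hkN, hkinj⟩ := exists_pow_smul_sum_injOn U (f := fun v => (5 : ℝ) • aeval zeta5 (p v))
    (fun v hv => smul_ne_zero (by norm_num) (hp0 v hv)) (c := -φ)
    (by rw [abs_neg, abs_of_pos Real.goldenRatio_pos]; exact Real.one_lt_goldenRatio) N
  have hphys (v : ℂ) : aeval zeta5 (5 * (X ^ 2 + X ^ 3) ^ k v * p v)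
      = (-φ) ^ k v • (5 : ℝ) • aeval zeta5 (p v) := by
    simp only [map_mul, map_pow, aeval_zeta5_X_sq_add_X_cube, map_ofNat, Complex.real_smul]
    push_cast; ring
  have hint (v : ℂ) : ‖aeval (zeta5 ^ 2) (5 * (X ^ 2 + X ^ 3) ^ k v * p v)‖
      = 5 * φ⁻¹ ^ k v * ‖aeval (zeta5 ^ 2) (p v)‖ := by
    rw [map_mul, map_mul, map_pow, aeval_zeta5_sq_X_sq_add_X_cube, norm_mul, norm_mul, norm_pow,
      Complex.norm_real, Real.norm_of_nonneg (by positivity), map_ofNat, Complex.norm_ofNat]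
  refine ⟨fun v => 5 * (X ^ 2 + X ^ 3) ^ k v * p v, fun v _ => ?_, fun v hv => ?_,
    hkinj.congr fun S _ => Finset.sum_congr rfl fun v _ => (hphys v).symm, ?_⟩
  · have h5 : (5 : ZMod 5) = 0 := rfl
    simp [h5]
  · rw [hphys]
    exact Submodule.smul_mem _ _ (Submodule.smul_mem _ _ (hpv v hv))
  · calc ∑ v ∈ U, ‖aeval (zeta5 ^ 2) (5 * (X ^ 2 + X ^ 3) ^ k v * p v)‖
        ≤ ∑ v ∈ U, 5 * φ⁻¹ ^ N * ‖aeval (zeta5 ^ 2) (p v)‖ := by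
          refine Finset.sum_le_sum fun v hv => ?_
          rw [hint]
          gcongr 5 * ?_ * _
          exact pow_le_pow_of_le_one (by positivity) hφ.le (hkN v hv)
      _ = 5 * φ⁻¹ ^ N * M := by rw [Finset.mul_sum]
      _ ≤ 5 * φ⁻¹ ^ N * (M + 1) := by gcongr; linarith
      _ < ε := by
          rw [lt_div_iff₀ (by positivity)] at hN
          linarith

theorem not_determined_by_finitely_many_Z5_xrays_general (Λ : Set ℂ) (hΛ : IsPMS Λ) (U : Finset ℂ)
    (hUdir : ∀ u ∈ U, ‖u‖ = 1 ∧ IsZ5Direction u) :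
    ∃ F F' : Set ℂ, F ⊆ Λ ∧ F.Finite ∧ F' ⊆ Λ ∧ F'.Finite ∧ F ≠ F' ∧
      ∀ u ∈ U, Xray u F = Xray u F' := by
  obtain ⟨t, u, -, rfl⟩ := hΛ
  obtain ⟨x, hx⟩ := interior_pent_nonempty
  obtain ⟨ε, hε, hball⟩ := Metric.isOpen_iff.1 isOpen_interior x hx
  obtain ⟨p₀, hp₀1, hp₀⟩ := exists_aeval_zeta5_sq_near (u + x) (half_pos hε)
  obtain ⟨w, hw5, hwpar, hwinj, hwsmall⟩ :=
    exists_switching_family U (fun v hv => (hUdir v hv).2) (half_pos hε)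
  refine exists_ne_xray_eq_of_injOn_sum (b := t + aeval zeta5 p₀) (fun S hS => ?_) hwinj hwpar
  have hmem : aeval zeta5 (p₀ + ∑ v ∈ S, w v) ∈ LambdaPu u := by
    refine aeval_zeta5_mem_LambdaPu ?_ (interior_subset (hball ?_))
    · rw [eval_add, eval_finsetSum, Int.cast_add, Int.cast_sum, hp₀1,
        Finset.sum_eq_zero fun v hv => hw5 v (hS hv), add_zero]
    · have hsum : ‖∑ v ∈ S, aeval (zeta5 ^ 2) (w v)‖ < ε / 2 :=
        (norm_sum_le _ _).trans_lt <| (Finset.sum_le_sum_of_subset_of_nonneg hS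
          fun _ _ _ => norm_nonneg _).trans_lt hwsmall
      rw [Metric.mem_ball, dist_eq_norm, map_add, map_sum]
      calc _ = ‖(aeval (zeta5 ^ 2) p₀ - (u + x)) + ∑ v ∈ S, aeval (zeta5 ^ 2) (w v)‖ := by
            congr 1; ring
        _ < ε := (norm_add_le _ _).trans_lt (by linarith)
  exact ⟨_, hmem, by rw [map_add, map_sum, add_assoc]⟩

theorem not_determined_by_finitely_many_Z5_xrays (Λ : Set ℂ) (hΛ : IsPMS Λ) (U : Finset ℂ)
    (hUdir : ∀ u ∈ U, ‖u‖ = 1 ∧ IsZ5Direction u)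
    (hUpar : (U : Set ℂ).Pairwise fun u v => ¬ Par u v) :
    ∃ F F' : Set ℂ, F ⊆ Λ ∧ F.Finite ∧ F' ⊆ Λ ∧ F'.Finite ∧ F ≠ F' ∧
      ∀ u ∈ U, Xray u F = Xray u F' :=
  not_determined_by_finitely_many_Z5_xrays_general Λ hΛ U hUdir

end
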